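/- For smooth positive functions a₁,…,a₄ on an open set Ω ⊂ ℝ^d, the pointwise identity ∂_t[∑ᵢ (aᵢ ln aᵢ − aᵢ + 1)] − Δ[∑ᵢ dᵢ (aᵢ ln aᵢ − aᵢ + 1)] = −(a₁a₃ − a₂a₄)(ln(a₁a₃) − ln(a₂a₄)) − ∑ᵢ dᵢ |∇aᵢ|²/aᵢ holds whenever each aᵢ solves ∂_t aᵢ − dᵢ Δaᵢ = (−1)^i (a₁a₃ − a₂a₄). -/

import Mathlib

open Real

noncomputable def lap {d : ℕ} (f : EuclideanSpace ℝ (Fin d) → ℝ)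
    (x : EuclideanSpace ℝ (Fin d)) : ℝ :=
  ∑ i : Fin d, fderiv ℝ (fun y => fderiv ℝ f y (EuclideanSpace.single i 1)) x
    (EuclideanSpace.single i 1)

section Aux

variable {dim : ℕ}

lemma grad_sq (f : EuclideanSpace ℝ (Fin dim) → ℝ) (x : EuclideanSpace ℝ (Fin dim)) :
    ‖gradient f x‖^2 = ∑ j : Fin dim, (fderiv ℝ f x (EuclideanSpace.single j 1))^2 := by
  have hg : ∀ j, gradient f x j = fderiv ℝ f x (EuclideanSpace.single j 1) := by
    intro j
    have h1 : inner (𝕜 := ℝ) (gradient f x) (EuclideanSpace.single j (1:ℝ))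
        = fderiv ℝ f x (EuclideanSpace.single j 1) :=
      InnerProductSpace.toDual_symm_apply
    rw [← h1, real_inner_comm, EuclideanSpace.inner_single_left]
    simp
  rw [EuclideanSpace.norm_eq, Real.sq_sqrt (by positivity)]
  simp only [Real.norm_eq_abs, sq_abs, hg]

lemma hasFDerivAt_ent {f : EuclideanSpace ℝ (Fin dim) → ℝ} {x : EuclideanSpace ℝ (Fin dim)}
    (hf : DifferentiableAt ℝ f x) (hx : 0 < f x) (c : ℝ) :
    HasFDerivAt (fun y => c * (f y * Real.log (f y) - f y + 1))
      ((c * Real.log (f x)) • fderiv ℝ f x) x := by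
  have h1 : HasDerivAt (fun u : ℝ => c * (u * Real.log u - u + 1)) (c * Real.log (f x)) (f x) := by
    have := (((Real.hasDerivAt_mul_log hx.ne').sub (hasDerivAt_id (f x))).add_const 1).const_mul c
    refine this.congr_deriv ?_
    ring
  exact h1.comp_hasFDerivAt x hf.hasFDerivAt

lemma contDiff_pd {f : EuclideanSpace ℝ (Fin dim) → ℝ} (hf : ContDiff ℝ (⊤ : ℕ∞) f)
    (v : EuclideanSpace ℝ (Fin dim)) : ContDiff ℝ (⊤ : ℕ∞) (fun y => fderiv ℝ f y v) :=
  (hf.fderiv_right (by simp)).clm_apply contDiff_const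

lemma contDiff_ent {f : EuclideanSpace ℝ (Fin dim) → ℝ} (hf : ContDiff ℝ (⊤ : ℕ∞) f)
    (hpos : ∀ y, 0 < f y) (c : ℝ) :
    ContDiff ℝ (⊤ : ℕ∞) (fun y => c * (f y * Real.log (f y) - f y + 1)) :=
  contDiff_const.mul (((hf.mul (hf.log fun y => (hpos y).ne')).sub hf).add contDiff_const)

lemma lap_ent {f : EuclideanSpace ℝ (Fin dim) → ℝ} (hf : ContDiff ℝ (⊤ : ℕ∞) f)
    (hpos : ∀ y, 0 < f y) (c : ℝ) (x : EuclideanSpace ℝ (Fin dim)) :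
    lap (fun y => c * (f y * Real.log (f y) - f y + 1)) x
      = c * Real.log (f x) * lap f x + c * ‖gradient f x‖^2 / f x := by
  have hdiff : Differentiable ℝ f := hf.differentiable (by simp)
  rw [grad_sq]
  unfold lap
  have key : ∀ j : Fin dim,
      fderiv ℝ (fun y => fderiv ℝ (fun z => c * (f z * Real.log (f z) - f z + 1)) y
          (EuclideanSpace.single j 1)) x (EuclideanSpace.single j 1)
      = c * Real.log (f x) * fderiv ℝ (fun y => fderiv ℝ f y (EuclideanSpace.single j 1)) x
            (EuclideanSpace.single j 1)
        + c * (fderiv ℝ f x (EuclideanSpace.single j 1))^2 / f x := by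
    intro j
    set e := EuclideanSpace.single j (1:ℝ)
    have hG : ContDiff ℝ (⊤ : ℕ∞) (fun y => fderiv ℝ f y e) := contDiff_pd hf e
    have h1 : (fun y => fderiv ℝ (fun z => c * (f z * Real.log (f z) - f z + 1)) y e)
        = fun y => (c * Real.log (f y)) * fderiv ℝ f y e := by
      funext y
      rw [(hasFDerivAt_ent (hdiff y) (hpos y) c).fderiv]
      simp
    rw [h1]
    have hlog : HasFDerivAt (fun y => c * Real.log (f y))
        ((c * (f x)⁻¹) • fderiv ℝ f x) x := by
      have := ((Real.hasDerivAt_log (hpos x).ne').const_mul c).comp_hasFDerivAt x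
        (hdiff x).hasFDerivAt
      exact this
    have hGd : HasFDerivAt (fun y => fderiv ℝ f y e) (fderiv ℝ (fun y => fderiv ℝ f y e) x) x :=
      ((hG.differentiable (by simp)) x).hasFDerivAt
    rw [(hlog.fun_mul hGd).fderiv]
    simp only [ContinuousLinearMap.add_apply, ContinuousLinearMap.smul_apply, smul_eq_mul]
    field_simp
  rw [Finset.sum_congr rfl (fun j _ => key j), Finset.sum_add_distrib, ← Finset.mul_sum,
    ← Finset.sum_div, ← Finset.mul_sum]

lemma lap_sum {ι : Type*} (s : Finset ι) (F : ι → EuclideanSpace ℝ (Fin dim) → ℝ)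
    (hF : ∀ i ∈ s, ContDiff ℝ (⊤ : ℕ∞) (F i)) (x : EuclideanSpace ℝ (Fin dim)) :
    lap (fun y => ∑ i ∈ s, F i y) x = ∑ i ∈ s, lap (F i) x := by
  unfold lap
  rw [Finset.sum_comm]
  refine Finset.sum_congr rfl fun j _ => ?_
  have h1 : (fun y => fderiv ℝ (fun z => ∑ i ∈ s, F i z) y (EuclideanSpace.single j 1))
      = fun y => ∑ i ∈ s, fderiv ℝ (F i) y (EuclideanSpace.single j 1) := by
    funext y
    rw [fderiv_fun_sum (fun i hi => ((hF i hi).differentiable (by simp)).differentiableAt)]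
    simp
  rw [h1, fderiv_fun_sum (fun i hi =>
    ((contDiff_pd (hF i hi) _).differentiable (by simp)) x)]
  simp

end Aux

/-- The local entropy identity: for smooth positive solutions of the
reaction-diffusion system (species i = 1,…,4 indexed by Fin 4, with sign
(−1)^(i+1) for the index i : Fin 4 representing species i+1),
∂ₜ[∑ᵢ(aᵢ ln aᵢ − aᵢ + 1)] − Δ[∑ᵢ dᵢ(aᵢ ln aᵢ − aᵢ + 1)]
  = −(a₁a₃ − a₂a₄)(ln(a₁a₃) − ln(a₂a₄)) − ∑ᵢ dᵢ|∇aᵢ|²/aᵢ. -/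
theorem stmt_10 (dim : ℕ) (Ω : Set (EuclideanSpace ℝ (Fin dim))) (hΩ : IsOpen Ω)
    (D : Fin 4 → ℝ) (hD : ∀ i, 0 < D i)
    (a : Fin 4 → ℝ → EuclideanSpace ℝ (Fin dim) → ℝ)
    (ha_smooth : ∀ i, ContDiff ℝ (⊤ : ℕ∞)
      (fun p : ℝ × EuclideanSpace ℝ (Fin dim) => a i p.1 p.2))
    (ha_pos : ∀ i t x, 0 < a i t x)
    (heq : ∀ i : Fin 4, ∀ t : ℝ, ∀ x ∈ Ω,
      deriv (fun s => a i s x) t - D i * lap (a i t) x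
        = (-1 : ℝ)^((i : ℕ) + 1) * (a 0 t x * a 2 t x - a 1 t x * a 3 t x)) :
    ∀ t : ℝ, ∀ x ∈ Ω,
      deriv (fun s => ∑ i : Fin 4,
          (a i s x * Real.log (a i s x) - a i s x + 1)) t
        - lap (fun y => ∑ i : Fin 4,
            D i * (a i t y * Real.log (a i t y) - a i t y + 1)) x
      = -((a 0 t x * a 2 t x - a 1 t x * a 3 t x) *
            (Real.log (a 0 t x * a 2 t x) - Real.log (a 1 t x * a 3 t x))
          + ∑ i : Fin 4, D i * ‖gradient (a i t) x‖^2 / a i t x) := by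
  intro t x hx
  -- smoothness in space
  have hsp : ∀ i t', ContDiff ℝ (⊤ : ℕ∞) (a i t') := fun i t' =>
    (ha_smooth i).comp (contDiff_const.prodMk contDiff_id)
  -- smoothness in time
  have htm : ∀ i x', ContDiff ℝ (⊤ : ℕ∞) (fun s => a i s x') := fun i x' =>
    (ha_smooth i).comp (contDiff_id.prodMk contDiff_const)
  -- time derivative
  have hder : deriv (fun s => ∑ i : Fin 4,
      (a i s x * Real.log (a i s x) - a i s x + 1)) t
      = ∑ i : Fin 4, Real.log (a i t x) * deriv (fun s => a i s x) t := by
    have h : ∀ i : Fin 4, HasDerivAt (fun s => a i s x * Real.log (a i s x) - a i s x + 1)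
        (Real.log (a i t x) * deriv (fun s => a i s x) t) t := by
      intro i
      have hu : HasDerivAt (fun s => a i s x) (deriv (fun s => a i s x) t) t :=
        (((htm i x).differentiable (by simp)) t).hasDerivAt
      have hφ : HasDerivAt (fun u : ℝ => u * Real.log u - u + 1)
          (Real.log (a i t x)) (a i t x) := by
        have := ((Real.hasDerivAt_mul_log (ha_pos i t x).ne').sub
          (hasDerivAt_id (a i t x))).add_const 1
        refine this.congr_deriv ?_
        ring
      exact hφ.comp t hu
    exact (HasDerivAt.fun_sum (fun i _ => h i)).deriv
  -- Laplacian of the weighted entropy sum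
  have hlap : lap (fun y => ∑ i : Fin 4,
      D i * (a i t y * Real.log (a i t y) - a i t y + 1)) x
      = ∑ i : Fin 4, (D i * Real.log (a i t x) * lap (a i t) x
          + D i * ‖gradient (a i t) x‖^2 / a i t x) := by
    rw [lap_sum Finset.univ
      (fun i y => D i * (a i t y * Real.log (a i t y) - a i t y + 1))
      (fun i _ => contDiff_ent (hsp i t) (fun y => ha_pos i t y) (D i)) x]
    exact Finset.sum_congr rfl fun i _ =>
      lap_ent (hsp i t) (fun y => ha_pos i t y) (D i) x
  rw [hder, hlap]
  have hu : ∀ i : Fin 4, deriv (fun s => a i s x) t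
      = D i * lap (a i t) x
        + (-1 : ℝ)^((i : ℕ) + 1) * (a 0 t x * a 2 t x - a 1 t x * a 3 t x) := by
    intro i
    have := heq i t x hx
    linarith
  simp only [Fin.sum_univ_four, hu]
  rw [Real.log_mul (ha_pos 0 t x).ne' (ha_pos 2 t x).ne',
    Real.log_mul (ha_pos 1 t x).ne' (ha_pos 3 t x).ne']
  norm_num [show ((0:Fin 4):ℕ)=0 from rfl, show ((1:Fin 4):ℕ)=1 from rfl,
    show ((2:Fin 4):ℕ)=2 from rfl, show ((3:Fin 4):ℕ)=3 from rfl]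
  ring
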